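/- arXiv:2408.02002 — 5 statements merged into one kernel-verified Lean document; each statement's English description precedes it below -/
import Mathlib

section
/- Let m, n, t be positive integers with m ≥ t ≥ 2 and n ≡ 1 (mod m). Let λ : ℕ → ℂ be a sequence such that λ(k) = 0 for all k with (n+m-1)/m ≤ k ≤ n-1. Then the sum of λ(k₁)λ(k₂)⋯λ(k_t) over all tuples (k₁,…,k_t) of nonnegative integers with k₁+⋯+k_t ≤ n-1 equals (∑_{k=0}^{(n-1)/m} λ(k))^t. -/
/-- El Bachraoui's lemma: if `λ(k) = 0` for `(n+m-1)/m ≤ k ≤ n-1`, then the sum of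
`λ(k₁)⋯λ(k_t)` over all tuples of nonnegative integers with `k₁+⋯+k_t ≤ n-1` equals
`(∑_{k=0}^{(n-1)/m} λ(k))^t`. -/
theorem stmt_0 (m n t : ℕ) (ht : 2 ≤ t) (hm : t ≤ m) (hn : 0 < n) (hm0 : 0 < m)
    (hmod : n % m = 1) (lam : ℕ → ℂ)
    (hvanish : ∀ k, (n + m - 1) / m ≤ k → k ≤ n - 1 → lam k = 0) :
    ∑ s ∈ Finset.range n, ∑ k ∈ Finset.Nat.antidiagonalTuple t s, ∏ i, lam (k i)
      = (∑ k ∈ Finset.range ((n - 1) / m + 1), lam k) ^ t := by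
  set q := n / m with hq
  have hdm : m * q + 1 = n := by rw [hq, ← hmod]; exact Nat.div_add_mod n m
  have hn1 : n - 1 = m * q := by omega
  have hvan : ∀ k, q + 1 ≤ k → k ≤ n - 1 → lam k = 0 := by
    intro k h1 h2
    apply hvanish k _ h2
    have h3 : n + m - 1 = m * (q + 1) := by
      have : m * (q + 1) = m * q + m := by ring
      omega
    rw [h3, Nat.mul_div_cancel_left _ hm0]
    exact h1
  have hq' : (n - 1) / m = q := by rw [hn1, Nat.mul_div_cancel_left _ hm0]
  rw [hq']
  set S := Fintype.piFinset (fun _ : Fin t => Finset.range (q + 1)) with hS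
  have hdisj : ∀ s₁ ∈ Finset.range n, ∀ s₂ ∈ Finset.range n, s₁ ≠ s₂ →
      Disjoint (Finset.Nat.antidiagonalTuple t s₁) (Finset.Nat.antidiagonalTuple t s₂) := by
    intro s₁ _ s₂ _ hne
    rw [Finset.disjoint_left]
    intro k hk1 hk2
    rw [Finset.Nat.mem_antidiagonalTuple] at hk1 hk2
    exact hne (hk1 ▸ hk2 ▸ rfl)
  rw [Finset.sum_biUnion hdisj |>.symm]
  have hsub : S ⊆ (Finset.range n).biUnion (Finset.Nat.antidiagonalTuple t) := by
    intro k hk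
    rw [Fintype.mem_piFinset] at hk
    rw [Finset.mem_biUnion]
    refine ⟨∑ i, k i, ?_, by rw [Finset.Nat.mem_antidiagonalTuple]⟩
    rw [Finset.mem_range]
    calc ∑ i, k i ≤ ∑ _i : Fin t, q :=
          Finset.sum_le_sum (fun i _ => by
            have := hk i; rw [Finset.mem_range] at this; omega)
      _ = t * q := by simp [Finset.sum_const, mul_comm]
      _ ≤ m * q := Nat.mul_le_mul_right q hm
      _ = n - 1 := hn1.symm
      _ < n := by omega
  have hzero : ∀ k ∈ (Finset.range n).biUnion (Finset.Nat.antidiagonalTuple t),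
      k ∉ S → ∏ i, lam (k i) = 0 := by
    intro k hk hks
    rw [Finset.mem_biUnion] at hk
    obtain ⟨s, hs, hks'⟩ := hk
    rw [Finset.mem_range] at hs
    rw [Finset.Nat.mem_antidiagonalTuple] at hks'
    rw [Fintype.mem_piFinset] at hks
    push_neg at hks
    obtain ⟨i, hi⟩ := hks
    rw [Finset.mem_range] at hi
    push_neg at hi
    apply Finset.prod_eq_zero (Finset.mem_univ i)
    apply hvan
    · omega
    · have : k i ≤ ∑ j, k j := Finset.single_le_sum (fun j _ => Nat.zero_le _) (Finset.mem_univ i)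
      omega
  rw [← Finset.sum_subset hsub hzero]
  rw [← Finset.prod_univ_sum]
  simp [Finset.prod_const]
end

section
/- Let p be an odd prime with p ≡ 1 (mod 6). Then ∑_{r=1}^{(p-1)/3} (1/(3r-1)² - 1/(3r)²) ≡ -(1/3)·H_{(p-1)/3}^{(2)} (mod p), where the congruence is between rational numbers whose denominators are coprime to p, and H_n^{(2)} = ∑_{r=1}^n 1/r². -/
open Finset

section helpers
variable {p : ℕ} [Fact p.Prime]

lemma aux_dvd_ne {d a b : ℕ} (hdvd : d ∣ a*b) (ha : ((a : ZMod p)) ≠ 0)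
    (hb : ((b : ZMod p)) ≠ 0) : ((d : ZMod p)) ≠ 0 := by
  intro h0
  have h := ((ZMod.natCast_eq_zero_iff _ _).1 h0).trans hdvd
  rcases (Nat.Prime.dvd_mul Fact.out).1 h with h | h
  · exact ha ((ZMod.natCast_eq_zero_iff _ _).2 h)
  · exact hb ((ZMod.natCast_eq_zero_iff _ _).2 h)

lemma aux_cast_sum (s : Finset ℕ) (f : ℕ → ℚ)
    (h : ∀ i ∈ s, ((f i).den : ZMod p) ≠ 0) :
    (((∑ i ∈ s, f i).den : ZMod p) ≠ 0) ∧
      (((∑ i ∈ s, f i : ℚ) : ZMod p) = ∑ i ∈ s, ((f i : ℚ) : ZMod p)) := by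
  classical
  induction s using Finset.cons_induction with
  | empty => simpa using one_ne_zero
  | cons a s ha ih =>
    have h1 : ((f a).den : ZMod p) ≠ 0 := h a (mem_cons_self a s)
    obtain ⟨hd, hc⟩ := ih (fun i hi => h i (mem_cons_of_mem hi))
    rw [Finset.sum_cons, Finset.sum_cons]
    exact ⟨aux_dvd_ne (Rat.add_den_dvd _ _) h1 hd,
      by rw [Rat.cast_add_of_ne_zero h1 hd, hc]⟩

lemma aux_cast_inv_sq {n : ℕ} (hn : (n : ZMod p) ≠ 0) :
    (((1 / (n:ℚ)^2).den : ZMod p) ≠ 0) ∧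
      (((1 / (n:ℚ)^2 : ℚ) : ZMod p) = 1 / (n : ZMod p)^2) := by
  have hn0 : n ≠ 0 := by rintro rfl; simp at hn
  have h1 : (1/(n:ℚ)^2) = (((n^2 : ℕ) : ℚ))⁻¹ := by push_cast; rw [one_div]
  have hnum : ((((n^2 : ℕ) : ℚ)).num : ZMod p) ≠ 0 := by
    rw [Rat.num_natCast]
    push_cast
    exact pow_ne_zero 2 hn
  constructor
  · rw [h1, Rat.inv_natCast_den_of_pos (by positivity)]
    push_cast
    exact pow_ne_zero 2 hn
  · rw [h1, Rat.cast_inv_of_ne_zero hnum, Rat.cast_natCast]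
    push_cast
    rw [one_div]

lemma aux_term {n1 n2 : ℕ} (h1 : (n1 : ZMod p) ≠ 0) (h2 : (n2 : ZMod p) ≠ 0) :
    (((1/(n1:ℚ)^2 - 1/(n2:ℚ)^2).den : ZMod p) ≠ 0) ∧
      ((((1/(n1:ℚ)^2 - 1/(n2:ℚ)^2) : ℚ) : ZMod p)
        = 1/(n1 : ZMod p)^2 - 1/(n2 : ZMod p)^2) := by
  obtain ⟨d1, c1⟩ := aux_cast_inv_sq (p := p) h1
  obtain ⟨d2, c2⟩ := aux_cast_inv_sq (p := p) h2
  have hdvd : (1/(n1:ℚ)^2 - 1/(n2:ℚ)^2).den ∣ (1/(n1:ℚ)^2).den * (1/(n2:ℚ)^2).den := by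
    rw [sub_eq_add_neg]
    have := Rat.add_den_dvd (1/(n1:ℚ)^2) (-(1/(n2:ℚ)^2))
    rwa [Rat.neg_den] at this
  exact ⟨aux_dvd_ne hdvd d1 d2, by rw [Rat.cast_sub_of_ne_zero d1 d2, c1, c2]⟩

end helpers


lemma aux_sum_Icc_one_succ {M : Type*} [AddCommMonoid M] (f : ℕ → M) (n : ℕ) :
    ∑ k ∈ Icc 1 (n+1), f k = (∑ k ∈ Icc 1 n, f k) + f (n+1) := by
  rw [← Finset.Ico_add_one_right_eq_Icc, Finset.sum_Ico_succ_top (by omega), Finset.Ico_add_one_right_eq_Icc]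

lemma aux_sum_blocks {M : Type*} [AddCommMonoid M] (g : ℕ → M) (m : ℕ) :
    ∑ k ∈ Icc 1 (3*m), g k
      = ∑ r ∈ Icc 1 m, (g (3*r-2) + g (3*r-1) + g (3*r)) := by
  induction m with
  | zero => simp
  | succ m ih =>
    have e4 : 3*(m+1) = 3*m+1+1+1 := by ring
    rw [e4, aux_sum_Icc_one_succ, aux_sum_Icc_one_succ, aux_sum_Icc_one_succ,
      aux_sum_Icc_one_succ, ih]
    have e1 : 3*(m+1)-2 = 3*m+1 := by omega
    have e2 : 3*(m+1)-1 = 3*m+1+1 := by omega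
    have e3 : 3*(m+1) = 3*m+1+1+1 := by omega
    rw [e1, e2, e3]
    abel

variable {p : ℕ} [Fact p.Prime]

lemma aux_sum_sq (h2 : (2 : ZMod p) ≠ 0) (h3 : (3 : ZMod p) ≠ 0) :
    ∑ x : ZMod p, x^2 = 0 := by
  have h4 : ∑ x : ZMod p, ((2:ZMod p)*x)^2 = ∑ x : ZMod p, x^2 :=
    Equiv.sum_comp (Equiv.mulLeft₀ 2 h2) (· ^ 2)
  simp only [mul_pow, ← Finset.mul_sum] at h4
  have h5 : (3 : ZMod p) * ∑ x : ZMod p, x^2 = 0 := by linear_combination h4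
  exact (mul_eq_zero.mp h5).resolve_left h3

lemma aux_sum_inv_sq (h2 : (2 : ZMod p) ≠ 0) (h3 : (3 : ZMod p) ≠ 0) :
    ∑ x : ZMod p, (x⁻¹)^2 = 0 := by
  have := Equiv.sum_comp (Equiv.inv (ZMod p)) (fun x : ZMod p => x ^ 2)
  simp only [Equiv.inv_apply] at this
  rw [this]
  exact aux_sum_sq h2 h3

lemma aux_total (h2 : (2 : ZMod p) ≠ 0) (h3 : (3 : ZMod p) ≠ 0) :
    ∑ k ∈ Icc 1 (p-1), (((k:ZMod p))⁻¹)^2 = 0 := by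
  have hp1 : 1 ≤ p := (Fact.out : p.Prime).one_lt.le
  have hins : Icc 0 (p-1) = insert 0 (Icc 1 (p-1)) := by
    ext x; simp only [Finset.mem_Icc, Finset.mem_insert]; omega
  have h0 : ∑ k ∈ Icc 0 (p-1), (((k:ZMod p))⁻¹)^2
      = ∑ k ∈ Icc 1 (p-1), (((k:ZMod p))⁻¹)^2 := by
    rw [hins, Finset.sum_insert (by simp)]
    simp
  rw [← h0]
  have hrange : Icc 0 (p-1) = Finset.range p := by
    rw [Finset.range_eq_Ico, ← Finset.Ico_add_one_right_eq_Icc]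
    congr 1
    omega
  rw [hrange]
  have hb : ∑ k ∈ Finset.range p, (((k:ZMod p))⁻¹)^2 = ∑ x : ZMod p, (x⁻¹)^2 := by
    refine Finset.sum_nbij' (i := fun k => ((k : ZMod p))) (j := fun x => x.val) ?_ ?_ ?_ ?_ ?_
    · intro a _; exact Finset.mem_univ _
    · intro x _
      simpa using (ZMod.val_lt x)
    · intro a ha
      exact ZMod.val_cast_of_lt (Finset.mem_range.1 ha)
    · intro x _
      exact ZMod.natCast_zmod_val x
    · intro a _; rfl
  rw [hb]
  exact aux_sum_inv_sq h2 h3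

lemma aux_key (m : ℕ) (hm : p = 3*m+1) (h2 : (2 : ZMod p) ≠ 0) (h3 : (3 : ZMod p) ≠ 0) :
    ∑ r ∈ Icc 1 m, (1/((3*r-1 : ℕ) : ZMod p)^2 - 1/((3*r : ℕ) : ZMod p)^2)
      = -(1/3) * ∑ r ∈ Icc 1 m, 1/((r : ℕ) : ZMod p)^2 := by
  set g : ℕ → ZMod p := fun k => (((k : ZMod p))⁻¹)^2 with hg
  have htot : ∑ r ∈ Icc 1 m, (g (3*r-2) + g (3*r-1) + g (3*r)) = 0 := by
    rw [← aux_sum_blocks g m, show 3*m = p - 1 by omega]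
    exact aux_total h2 h3
  rw [Finset.sum_add_distrib, Finset.sum_add_distrib] at htot
  -- reflection : ∑ g (3r-2) = ∑ g (3r)
  have hrefl : ∑ r ∈ Icc 1 m, g (3*r-2) = ∑ r ∈ Icc 1 m, g (3*r) := by
    refine Finset.sum_nbij' (i := fun r => m+1-r) (j := fun r => m+1-r) ?_ ?_ ?_ ?_ ?_
    · intro a ha; simp only [Finset.mem_Icc] at *; omega
    · intro a ha; simp only [Finset.mem_Icc] at *; omega
    · intro a ha; simp only [Finset.mem_Icc] at ha; show m+1-(m+1-a) = a; omega
    · intro a ha; simp only [Finset.mem_Icc] at ha; show m+1-(m+1-a) = a; omega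
    · intro a ha
      simp only [Finset.mem_Icc] at ha
      have e1 : 3*a-2 = p - 3*(m+1-a) := by omega
      have e2 : 3*(m+1-a) ≤ p := by omega
      rw [hg, e1]
      simp only
      rw [Nat.cast_sub e2, ZMod.natCast_self, zero_sub, inv_neg, neg_sq]
  -- S0 = 9⁻¹ H
  have hS0 : ∑ r ∈ Icc 1 m, g (3*r)
      = (9 : ZMod p)⁻¹ * ∑ r ∈ Icc 1 m, (((r : ZMod p))⁻¹)^2 := by
    rw [Finset.mul_sum]
    refine Finset.sum_congr rfl (fun r _ => ?_)
    rw [hg]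
    push_cast
    rw [mul_inv, mul_pow]
    congr 1
    rw [inv_pow]
    norm_num
  set H := ∑ r ∈ Icc 1 m, (((r : ZMod p))⁻¹)^2 with hH
  have h9 : (9 : ZMod p) ≠ 0 := by
    have : (9 : ZMod p) = 3^2 := by norm_num
    rw [this]
    exact pow_ne_zero 2 h3
  have hinv : (3 : ZMod p) * (9 : ZMod p)⁻¹ = (3 : ZMod p)⁻¹ := by
    field_simp
    norm_num
  have hS2 : ∑ r ∈ Icc 1 m, g (3*r-1) = -(2 : ZMod p) * ((9 : ZMod p)⁻¹ * H) := by
    linear_combination htot - hrefl - 2*hS0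
  have hgl : ∑ r ∈ Icc 1 m, (1/((3*r-1 : ℕ) : ZMod p)^2 - 1/((3*r : ℕ) : ZMod p)^2)
      = (∑ r ∈ Icc 1 m, g (3*r-1)) - ∑ r ∈ Icc 1 m, g (3*r) := by
    rw [← Finset.sum_sub_distrib]
    refine Finset.sum_congr rfl (fun r _ => ?_)
    rw [hg]
    simp only [inv_pow, one_div]
  have hgr : ∑ r ∈ Icc 1 m, 1/((r : ℕ) : ZMod p)^2 = H := by
    rw [hH]
    refine Finset.sum_congr rfl (fun r _ => ?_)
    simp only [inv_pow, one_div]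
  rw [hgl, hgr, one_div]
  linear_combination hS2 - hS0 - H * hinv

/-- For a prime `p ≡ 1 (mod 6)`,
`∑_{r=1}^{(p-1)/3} (1/(3r-1)² - 1/(3r)²) ≡ -(1/3)·H_{(p-1)/3}^{(2)} (mod p)`,
as rational numbers (i.e. `p` divides the numerator of the difference). -/
theorem stmt_1 (p : ℕ) (hp : p.Prime) (h6 : p % 6 = 1) :
    (p : ℤ) ∣ ((∑ r ∈ Finset.Icc 1 ((p - 1) / 3),
        ((1 : ℚ) / (3 * (r : ℚ) - 1) ^ 2 - 1 / (3 * (r : ℚ)) ^ 2))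
      - (-(1 / 3) * ∑ r ∈ Finset.Icc 1 ((p - 1) / 3), 1 / (r : ℚ) ^ 2)).num := by
  haveI : Fact p.Prime := ⟨hp⟩
  have hp2 := hp.two_le
  have hp7 : 7 ≤ p := by omega
  set m := (p-1)/3 with hmdef
  have hm : p = 3*m+1 := by omega
  have hlt : ∀ n : ℕ, n ≠ 0 → n < p → ((n : ZMod p) ≠ 0) := by
    intro n hn0 hnp h0
    have h := (ZMod.natCast_eq_zero_iff _ _).1 h0
    have := Nat.le_of_dvd (Nat.pos_of_ne_zero hn0) h
    omega
  have h2 : (2 : ZMod p) ≠ 0 := by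
    have := hlt 2 (by norm_num) (by omega); simpa using this
  have h3 : (3 : ZMod p) ≠ 0 := by
    have := hlt 3 (by norm_num) (by omega); simpa using this
  -- rewrite the LHS sum with natural-number casts
  have hL : ∑ r ∈ Finset.Icc 1 m, ((1:ℚ)/(3*(r:ℚ)-1)^2 - 1/(3*(r:ℚ))^2)
      = ∑ r ∈ Finset.Icc 1 m, (1/(((3*r-1 : ℕ)):ℚ)^2 - 1/(((3*r : ℕ)):ℚ)^2) := by
    refine Finset.sum_congr rfl (fun r hr => ?_)
    have h1 : 1 ≤ r := (Finset.mem_Icc.1 hr).1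
    rw [Nat.cast_sub (show 1 ≤ 3*r by omega)]
    push_cast
    ring
  rw [hL]
  -- nonvanishing facts for the indices
  have hn1 : ∀ r ∈ Finset.Icc 1 m, ((3*r-1 : ℕ) : ZMod p) ≠ 0 := by
    intro r hr
    have := Finset.mem_Icc.1 hr
    exact hlt _ (by omega) (by omega)
  have hn2 : ∀ r ∈ Finset.Icc 1 m, ((3*r : ℕ) : ZMod p) ≠ 0 := by
    intro r hr
    have := Finset.mem_Icc.1 hr
    exact hlt _ (by omega) (by omega)
  have hn3 : ∀ r ∈ Finset.Icc 1 m, ((r : ℕ) : ZMod p) ≠ 0 := by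
    intro r hr
    have := Finset.mem_Icc.1 hr
    exact hlt _ (by omega) (by omega)
  -- cast the two sums
  obtain ⟨hdL, hcL⟩ := aux_cast_sum (p := p) (Finset.Icc 1 m)
    (fun r => 1/(((3*r-1 : ℕ)):ℚ)^2 - 1/(((3*r : ℕ)):ℚ)^2)
    (fun r hr => (aux_term (hn1 r hr) (hn2 r hr)).1)
  obtain ⟨hdR, hcR⟩ := aux_cast_sum (p := p) (Finset.Icc 1 m)
    (fun r => 1/((r : ℕ):ℚ)^2)
    (fun r hr => (aux_cast_inv_sq (hn3 r hr)).1)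
  set A : ℚ := ∑ r ∈ Finset.Icc 1 m, (1/(((3*r-1 : ℕ)):ℚ)^2 - 1/(((3*r : ℕ)):ℚ)^2) with hA
  set S : ℚ := ∑ r ∈ Finset.Icc 1 m, 1/((r : ℕ):ℚ)^2 with hS
  set B : ℚ := -(1/3) * S with hB
  -- denominator facts for B and A - B
  have hden13 : ((-(1/3 : ℚ)).den : ZMod p) ≠ 0 := by
    have : (-(1/3 : ℚ)).den = 3 := by norm_num
    rw [this]
    simpa using h3
  have hdB : ((B.den : ZMod p)) ≠ 0 :=
    aux_dvd_ne (Rat.mul_den_dvd _ _) hden13 hdR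
  have hdD : (((A - B).den : ZMod p)) ≠ 0 := by
    refine aux_dvd_ne ?_ hdL hdB
    rw [sub_eq_add_neg]
    have := Rat.add_den_dvd A (-B)
    rwa [Rat.neg_den] at this
  -- compute the cast of A - B
  have hcB : ((B : ℚ) : ZMod p) = -(1/3 : ZMod p) * ∑ r ∈ Finset.Icc 1 m, 1/((r:ℕ) : ZMod p)^2 := by
    rw [hB, Rat.cast_mul_of_ne_zero hden13 hdR, hcR]
    congr 1
    · rw [Rat.cast_def]
      norm_num
      rw [neg_div, one_div]
    · exact Finset.sum_congr rfl (fun r hr => (aux_cast_inv_sq (hn3 r hr)).2)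
  have hcA : ((A : ℚ) : ZMod p)
      = ∑ r ∈ Finset.Icc 1 m, (1/((3*r-1 : ℕ) : ZMod p)^2 - 1/((3*r : ℕ) : ZMod p)^2) := by
    rw [hA, hcL]
    exact Finset.sum_congr rfl (fun r hr => (aux_term (hn1 r hr) (hn2 r hr)).2)
  have hcast0 : (((A - B : ℚ)) : ZMod p) = 0 := by
    rw [Rat.cast_sub_of_ne_zero hdL hdB, hcA, hcB, aux_key m hm h2 h3]
    ring
  -- conclude divisibility of the numerator
  rw [← ZMod.intCast_zmod_eq_zero_iff_dvd]
  have hfin : ((A - B).num : ZMod p) / (((A - B).den : ℕ) : ZMod p) = 0 := by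
    rw [← Rat.cast_def]
    exact hcast0
  rcases div_eq_zero_iff.mp hfin with h | h
  · exact h
  · exact absurd h hdD
end

section
/- Let a, b, c, q be elements of a commutative ring (or field of rational functions), and let n be a positive integer. Define x = a(1+a²+a⁴)(1+b²c+bc²) - a²(1+a²)(b+c+bc+b²c²) - bc(1-a³+a⁶) and y = a²(1+a²)(1+b²c+bc²) - a³(b+c+bc+b²c²) - abc(1+a⁴). Then, in the polynomial ring ℚ(a,b,c)[q], the polynomial (a-b)(a-c)(a-bc)(1-ab)(1-ac)(1-abc) - (b-qⁿ)(1-bcqⁿ)(c-qⁿ)(x-yqⁿ) is divisible by (a-qⁿ)(1-aqⁿ). -/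
open Polynomial

/-- The field `ℚ(a,b,c)` of rational functions in three variables. -/
noncomputable abbrev Kabc : Type := FractionRing (MvPolynomial (Fin 3) ℚ)

noncomputable def aa : Kabc := algebraMap (MvPolynomial (Fin 3) ℚ) Kabc (MvPolynomial.X 0)
noncomputable def bb : Kabc := algebraMap (MvPolynomial (Fin 3) ℚ) Kabc (MvPolynomial.X 1)
noncomputable def cc : Kabc := algebraMap (MvPolynomial (Fin 3) ℚ) Kabc (MvPolynomial.X 2)

noncomputable def xL : Kabc :=
  aa * (1 + aa ^ 2 + aa ^ 4) * (1 + bb ^ 2 * cc + bb * cc ^ 2)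
    - aa ^ 2 * (1 + aa ^ 2) * (bb + cc + bb * cc + bb ^ 2 * cc ^ 2)
    - bb * cc * (1 - aa ^ 3 + aa ^ 6)

noncomputable def yL : Kabc :=
  aa ^ 2 * (1 + aa ^ 2) * (1 + bb ^ 2 * cc + bb * cc ^ 2)
    - aa ^ 3 * (bb + cc + bb * cc + bb ^ 2 * cc ^ 2)
    - aa * bb * cc * (1 + aa ^ 4)

set_option maxHeartbeats 4000000 in
/-- First congruence of Lemma 2.2: in `ℚ(a,b,c)[q]`, the polynomial
`(a-b)(a-c)(a-bc)(1-ab)(1-ac)(1-abc) - (b-qⁿ)(1-bcqⁿ)(c-qⁿ)(x-yqⁿ)`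
is divisible by `(a-qⁿ)(1-aqⁿ)`. -/
theorem stmt_3 (n : ℕ) (hn : 0 < n) :
    (C aa - X ^ n) * (1 - C aa * X ^ n) ∣
      C ((aa - bb) * (aa - cc) * (aa - bb * cc) * (1 - aa * bb) * (1 - aa * cc)
          * (1 - aa * bb * cc))
        - (C bb - X ^ n) * (1 - C (bb * cc) * X ^ n) * (C cc - X ^ n)
          * (C xL - C yL * X ^ n) := by
  refine ⟨(fun A B Cc T => (B*Cc^2 + B^2*Cc + B^3*Cc^3 - A*Cc - A*B - A*B*Cc - A*B*Cc^3 - 2*A*B^2*Cc^2 - A*B^2*Cc^3 - A*B^3*Cc - A*B^3*Cc^2 - A*B^3*Cc^4 - A*B^4*Cc^3 + A^2 + A^2*Cc^2 + A^2*B*Cc + 2*A^2*B*Cc^2 + A^2*B^2 + 2*A^2*B^2*Cc + A^2*B^2*Cc^2 + A^2*B^2*Cc^3 + A^2*B^2*Cc^4 + A^2*B^3*Cc^2 + 2*A^2*B^3*Cc^3 + A^2*B^4*Cc^2 + A^2*B^4*Cc^4 - A^3*Cc - A^3*B - A^3*B*Cc - A^3*B*Cc^3 - 2*A^3*B^2*Cc^2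 - A^3*B^2*Cc^3 - A^3*B^3*Cc - A^3*B^3*Cc^2 - A^3*B^3*Cc^4 - A^3*B^4*Cc^3 + A^4*B*Cc^2 + A^4*B^2*Cc + A^4*B^3*Cc^3) + (-B*Cc - B^2*Cc^3 - B^3*Cc^2 + A + 2*A*B*Cc^2 + 2*A*B^2*Cc + A*B^2*Cc^2 + A*B^2*Cc^4 + 2*A*B^3*Cc^3 + A*B^4*Cc^2 - A^2*Cc - A^2*B - 2*A^2*B*Cc - A^2*B*Cc^3 - 2*A^2*B^2*Cc^2 - 2*A^2*B^2*Cc^3 - A^2*B^3*Cc - 2*A^2*B^3*Cc^2 - A^2*B^3*Cc^4 - A^2*B^4*Cc^3 + A^3 + 2*A^3*B*Cc^2 + 2*A^3*B^2*Cc + A^3*B^2*Cc^2 + A^3*B^2*Cc^4 + 2*A^3*B^3*Cc^3 + A^3*B^4*Cc^2 - A^4*B*Cc - A^4*B^2*Cc^3 - A^4*B^3*Cc^2)*T + (B^2*Cc^2 - A*B*Cc - A*B^2*Cc^3 - A*B^3*Cc^2 + A^2*B*Cc^2 + A^2*B^2*Cc + A^2*B^2*Cc^2 + A^2*B^3*Cc^3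 - A^3*B*Cc - A^3*B^2*Cc^3 - A^3*B^3*Cc^2 + A^4*B^2*Cc^2)*T^2)
      (C aa) (C bb) (C cc) (X^n), ?_⟩
  simp only [xL, yL, map_add, map_sub, map_mul, map_pow, map_one]
  ring
end

section
/- Let a, b, c be indeterminates and n a positive integer. Define u = -a{1+bc(b-c+bc+b³c-b²c²+b³c²+b⁵c²-b²c³-b⁴c³)} + bc(1+a²)(1+b²c-bc²+b⁴c²-b³c³) and v = -abc(1+b²c-bc²+b²c²+b⁴c²-b³c³) + b²c²(1+a²)(1+b²c-bc²). Then in the polynomial ring ℚ(a,b,c)[q], the polynomial (a-b)(b-c)(a-bc)(1-ab)(1-abc)(1-bc²) - (a-qⁿ)(1-aqⁿ)(c-qⁿ)(u-vqⁿ) is divisible by (b-qⁿ)(1-bcqⁿ). -/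
open Polynomial

set_option maxHeartbeats 2000000

noncomputable def uL : Kabc :=
  -aa * (1 + bb * cc * (bb - cc + bb * cc + bb ^ 3 * cc - bb ^ 2 * cc ^ 2 + bb ^ 3 * cc ^ 2
      + bb ^ 5 * cc ^ 2 - bb ^ 2 * cc ^ 3 - bb ^ 4 * cc ^ 3))
    + bb * cc * (1 + aa ^ 2) * (1 + bb ^ 2 * cc - bb * cc ^ 2 + bb ^ 4 * cc ^ 2 - bb ^ 3 * cc ^ 3)

noncomputable def vL : Kabc :=
  -(aa * bb * cc) * (1 + bb ^ 2 * cc - bb * cc ^ 2 + bb ^ 2 * cc ^ 2 + bb ^ 4 * cc ^ 2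
      - bb ^ 3 * cc ^ 3)
    + bb ^ 2 * cc ^ 2 * (1 + aa ^ 2) * (1 + bb ^ 2 * cc - bb * cc ^ 2)

noncomputable def qq0 : Kabc := - bb * cc^2 + bb^2 * cc + bb^2 * cc^4 - bb^3 * cc^3 + aa * cc - aa * bb - aa * bb * cc - aa * bb * cc^3 + 2 * aa * bb^2 * cc^2 + aa * bb^2 * cc^3 - aa * bb^3 * cc - aa * bb^3 * cc^2 - aa * bb^3 * cc^4 + aa * bb^4 * cc^3 + aa^2 - aa^2 * bb * cc - 2 * aa^2 * bb * cc^2 + aa^2 * bb^2 + 2 * aa^2 * bb^2 * cc + aa^2 * bb^2 * cc^2 + aa^2 * bb^2 * cc^3 + aa^2 * bb^2 * cc^4 - aa^2 * bb^3 * cc^2 - 2 * aa^2 * bb^3 * cc^3 + aa^2 * bb^4 * cc^2 + aa^3 * cc - aa^3 * bb - aa^3 * bb * cc - aa^3 * bb * cc^3 + 2 * aa^3 * bb^2 * cc^2 + aa^3 * bb^2 * cc^3 - aa^3 * bb^3 * cc - aa^3 * bb^3 * cc^2 - aa^3 * bb^3 * cc^4 + aa^3 * bb^4 * cc^3 - aa^4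 * bb * cc^2 + aa^4 * bb^2 * cc + aa^4 * bb^2 * cc^4 - aa^4 * bb^3 * cc^3
noncomputable def qq1 : Kabc := bb * cc - bb^2 * cc^3 + bb^3 * cc^2 - aa + 2 * aa * bb * cc^2 - 2 * aa * bb^2 * cc - aa * bb^2 * cc^2 - aa * bb^2 * cc^4 + 2 * aa * bb^3 * cc^3 - aa * bb^4 * cc^2 - aa^2 * cc + aa^2 * bb + 2 * aa^2 * bb * cc + aa^2 * bb * cc^3 - 2 * aa^2 * bb^2 * cc^2 - 2 * aa^2 * bb^2 * cc^3 + aa^2 * bb^3 * cc + 2 * aa^2 * bb^3 * cc^2 + aa^2 * bb^3 * cc^4 - aa^2 * bb^4 * cc^3 - aa^3 + 2 * aa^3 * bb * cc^2 - 2 * aa^3 * bb^2 * cc - aa^3 * bb^2 * cc^2 - aa^3 * bb^2 * cc^4 + 2 * aa^3 * bb^3 * cc^3 - aa^3 * bb^4 * cc^2 + aa^4 * bb * cc - aa^4 * bb^2 * cc^3 + aa^4 * bb^3 * cc^2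
noncomputable def qq2 : Kabc := - aa * bb * cc + aa * bb^2 * cc^3 - aa * bb^3 * cc^2 + aa^2 - aa^2 * bb * cc^2 + aa^2 * bb^2 * cc + aa^2 * bb^2 * cc^2 - aa^2 * bb^3 * cc^3 + aa^2 * bb^4 * cc^2 - aa^3 * bb * cc + aa^3 * bb^2 * cc^3 - aa^3 * bb^3 * cc^2

/-- Second congruence of Lemma 2.2: in `ℚ(a,b,c)[q]`, the polynomial
`(a-b)(b-c)(a-bc)(1-ab)(1-abc)(1-bc²) - (a-qⁿ)(1-aqⁿ)(c-qⁿ)(u-vqⁿ)`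
is divisible by `(b-qⁿ)(1-bcqⁿ)`. -/
theorem stmt_4 (n : ℕ) (hn : 0 < n) :
    (C bb - X ^ n) * (1 - C (bb * cc) * X ^ n) ∣
      C ((aa - bb) * (bb - cc) * (aa - bb * cc) * (1 - aa * bb) * (1 - aa * bb * cc)
          * (1 - bb * cc ^ 2))
        - (C aa - X ^ n) * (1 - C aa * X ^ n) * (C cc - X ^ n)
          * (C uL - C vL * X ^ n) := by
  refine ⟨C qq0 + C qq1 * X ^ n + C qq2 * (X ^ n) ^ 2, ?_⟩
  simp only [uL, vL, qq0, qq1, qq2, map_mul, map_add, map_sub, map_neg, map_one, map_pow,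
    map_ofNat]
  ring
end

section
/- Let n be a positive integer with n ≡ 1 (mod 3), a an indeterminate, and q such that all relevant denominators are nonzero (so all expressions are defined). Then lim_{a→1} { a(1-qⁿ)²/(1-a)² · ((q²;q³)_{(n-1)/3})⁴/((q³;q³)_{(n-1)/3})⁴ - (1-aqⁿ)(a-qⁿ)/(1-a)² · ((aq²,q²/a;q³)_{(n-1)/3})²/((q³/a,aq³;q³)_{(n-1)/3})² } = ((q²;q³)_{(n-1)/3})⁴/((q³;q³)_{(n-1)/3})⁴ · { qⁿ + 2[n]²·∑_{r=1}^{(n-1)/3}( q^{3r-1}/[3r-1]² - q^{3r}/[3r]² ) }. -/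
open Finset Filter

-- single factor limit
lemma aux_factor (x y : ℂ) (hx : (1:ℂ) - x ≠ 0) (hy : (1:ℂ) - y ≠ 0) :
    Tendsto (fun a : ℂ =>
      (1 - ((1 - a*x)*(1 - x/a))^2 * (1-y)^4 / (((1 - y/a)*(1 - a*y))^2 * (1-x)^4))
        / (1-a)^2)
      (nhdsWithin 1 {1}ᶜ)
      (nhds (2*(x/(1-x)^2 - y/(1-y)^2))) := by
  set g : ℂ → ℂ := fun a =>
    (x*(1-y)^2 - y*(1-x)^2) *
      (2*a*(1-x)^2*(1-y)^2 - (a-1)^2*(y*(1-x)^2 + x*(1-y)^2))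
      / ((1-x)^4 * ((1 - a*y)*(a - y))^2) with hg
  have hden : ((1:ℂ)-x)^4 * ((1 - 1*y)*(1 - y))^2 ≠ 0 := by
    simp only [one_mul]
    exact mul_ne_zero (pow_ne_zero _ hx) (pow_ne_zero _ (mul_ne_zero hy hy))
  have hcont : ContinuousAt g 1 := by
    apply ContinuousAt.div
    · fun_prop
    · fun_prop
    · simpa using hden
  have hg1 : g 1 = 2*(x/(1-x)^2 - y/(1-y)^2) := by
    simp only [hg]
    field_simp
    ring
  have htg : Tendsto g (nhdsWithin 1 {1}ᶜ) (nhds (2*(x/(1-x)^2 - y/(1-y)^2))) := by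
    rw [← hg1]
    exact hcont.continuousWithinAt.tendsto
  refine htg.congr' ?_
  have h0 : ∀ᶠ a in nhds (1:ℂ), a ≠ 0 := eventually_ne_nhds one_ne_zero
  have h1 : ∀ᶠ a in nhds (1:ℂ), 1 - a*y ≠ 0 := by
    have : ContinuousAt (fun a : ℂ => 1 - a*y) 1 := by fun_prop
    have := this.eventually_ne (by simpa using hy)
    simpa using this
  have h2 : ∀ᶠ a in nhds (1:ℂ), a - y ≠ 0 := by
    have : ContinuousAt (fun a : ℂ => a - y) 1 := by fun_prop
    have := this.eventually_ne (show (1:ℂ) - y ≠ 0 from hy)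
    simpa using this
  have hne : ∀ᶠ a in nhdsWithin (1:ℂ) {1}ᶜ, a ≠ 1 := eventually_mem_nhdsWithin
  filter_upwards [hne, (h0.and (h1.and h2)).filter_mono nhdsWithin_le_nhds]
    with a ha ⟨ha0, hay, hay'⟩
  have ha1 : (1:ℂ) - a ≠ 0 := sub_ne_zero.mpr (Ne.symm ha)
  simp only [hg]
  have hya : 1 - y/a ≠ 0 := by
    rw [show 1 - y/a = (a-y)/a by field_simp]; exact div_ne_zero hay' ha0
  have e : ((1 - a*x)*(1 - x/a))^2 * (1-y)^4 / (((1 - y/a)*(1 - a*y))^2 * (1-x)^4)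
      = ((1 - a*x)*(a - x))^2 * (1-y)^4 / (((a - y)*(1 - a*y))^2 * (1-x)^4) := by
    rw [div_eq_div_iff (mul_ne_zero (pow_ne_zero _ (mul_ne_zero hya hay)) (pow_ne_zero _ hx))
      (mul_ne_zero (pow_ne_zero _ (mul_ne_zero hay' hay)) (pow_ne_zero _ hx))]
    field_simp
  have hD : ((a - y)*(1 - a*y))^2 * (1-x)^4 ≠ 0 :=
    mul_ne_zero (pow_ne_zero _ (mul_ne_zero hay' hay)) (pow_ne_zero _ hx)
  rw [e, one_sub_div hD, div_div, div_eq_div_iff (mul_ne_zero (pow_ne_zero _ hx)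
    (pow_ne_zero _ (mul_ne_zero hay hay'))) (mul_ne_zero hD (pow_ne_zero _ ha1))]
  ring

noncomputable def psiF (q : ℂ) (j : ℕ) (a : ℂ) : ℂ :=
  ((1 - a*(q^2*q^(3*j)))*(1 - (q^2*q^(3*j))/a))^2 * (1-(q^3*q^(3*j)))^4
    / (((1 - (q^3*q^(3*j))/a)*(1 - a*(q^3*q^(3*j))))^2 * (1-(q^2*q^(3*j)))^4)

noncomputable def cF (q : ℂ) (j : ℕ) : ℂ :=
  2*((q^2*q^(3*j))/(1-(q^2*q^(3*j)))^2 - (q^3*q^(3*j))/(1-(q^3*q^(3*j)))^2)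

lemma hx' (q : ℂ) (hq : ∀ m : ℕ, 0 < m → q ^ m ≠ 1) (j : ℕ) :
    (1:ℂ) - q^2*q^(3*j) ≠ 0 := by
  rw [← pow_add]
  exact sub_ne_zero.mpr (Ne.symm (hq _ (by omega)))

lemma hy' (q : ℂ) (hq : ∀ m : ℕ, 0 < m → q ^ m ≠ 1) (j : ℕ) :
    (1:ℂ) - q^3*q^(3*j) ≠ 0 := by
  rw [← pow_add]
  exact sub_ne_zero.mpr (Ne.symm (hq _ (by omega)))

lemma psi_contAt (q : ℂ) (hq : ∀ m : ℕ, 0 < m → q ^ m ≠ 1) (j : ℕ) :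
    Tendsto (fun a => psiF q j a) (nhdsWithin 1 {1}ᶜ) (nhds 1) := by
  have hx := hx' q hq j
  have hy := hy' q hq j
  have hden : (((1:ℂ) - (q^3*q^(3*j))/1)*(1 - 1*(q^3*q^(3*j))))^2 * (1-(q^2*q^(3*j)))^4 ≠ 0 := by
    simp only [div_one, one_mul]
    exact mul_ne_zero (pow_ne_zero _ (mul_ne_zero hy hy)) (pow_ne_zero _ hx)
  have hcont : ContinuousAt (psiF q j) 1 := by
    apply ContinuousAt.div
    · apply ContinuousAt.mul _ continuousAt_const
      apply ContinuousAt.pow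
      apply ContinuousAt.mul (by fun_prop)
      exact ContinuousAt.sub continuousAt_const (ContinuousAt.div continuousAt_const
        continuousAt_id one_ne_zero)
    · apply ContinuousAt.mul _ continuousAt_const
      apply ContinuousAt.pow
      apply ContinuousAt.mul _ (by fun_prop)
      exact ContinuousAt.sub continuousAt_const (ContinuousAt.div continuousAt_const
        continuousAt_id one_ne_zero)
    · exact hden
  have h1 : psiF q j 1 = 1 := by
    simp only [psiF, div_one, one_mul]
    field_simp
  have := hcont.tendsto.mono_left (nhdsWithin_le_nhds (s := {1}ᶜ))
  rwa [h1] at this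

lemma prod_tendsto (q : ℂ) (hq : ∀ m : ℕ, 0 < m → q ^ m ≠ 1) (m : ℕ) :
    Tendsto (fun a : ℂ => (1 - ∏ j ∈ range m, psiF q j a) / (1-a)^2)
      (nhdsWithin 1 {1}ᶜ) (nhds (∑ j ∈ range m, cF q j)) := by
  induction m with
  | zero => simpa using tendsto_const_nhds
  | succ m ih =>
    have hP : Tendsto (fun a : ℂ => ∏ j ∈ range m, psiF q j a)
        (nhdsWithin 1 {1}ᶜ) (nhds 1) := by
      have := tendsto_finset_prod (range m) (fun j _ => psi_contAt q hq j)
      simpa using this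
    have hf := aux_factor (q^2*q^(3*m)) (q^3*q^(3*m)) (hx' q hq m) (hy' q hq m)
    have key := ih.add (hP.mul hf)
    simp only [one_mul] at key
    rw [sum_range_succ]
    have key' : Tendsto (fun a : ℂ => (1 - ∏ j ∈ range m, psiF q j a) / (1-a)^2
        + (∏ j ∈ range m, psiF q j a) * ((1 - psiF q m a)/(1-a)^2))
        (nhdsWithin 1 {1}ᶜ) (nhds (∑ j ∈ range m, cF q j + cF q m)) := key
    refine key'.congr (fun a => ?_)
    rw [prod_range_succ]
    ring

lemma alg_aux (z Dd P4 Q4 Nn u w : ℂ) (hz : z ≠ 0) (hD : Dd ≠ 0) (hP : P4 ≠ 0)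
    (hQ : Q4 ≠ 0) :
    (w * z + u) / z * P4 / Q4 - u / z * Nn / Dd
      = P4 / Q4 * w + P4 / Q4 * u * ((1 - Nn * Q4 / (Dd * P4)) / z) := by
  have iz : z * z⁻¹ = 1 := mul_inv_cancel₀ hz
  have iD : Dd * Dd⁻¹ = 1 := mul_inv_cancel₀ hD
  have iP : P4 * P4⁻¹ = 1 := mul_inv_cancel₀ hP
  have iQ : Q4 * Q4⁻¹ = 1 := mul_inv_cancel₀ hQ
  simp only [div_eq_mul_inv, mul_inv_rev]
  linear_combination (P4*Q4⁻¹*w)*iz + u*z⁻¹*Nn*Dd⁻¹*P4*P4⁻¹*iQ + u*z⁻¹*Nn*Dd⁻¹*iP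

/-- The L'Hôpital limit evaluation used in the proof of Theorem 1.1. Here `q : ℂ` is not a
root of unity (so all expressions are defined), `n ≡ 1 (mod 3)`, and
`(x;q³)_k = ∏_{j=0}^{k-1}(1-xq^{3j})`, `[s] = (1-q^s)/(1-q)`. As `a → 1` (with `a ≠ 1`),
`a(1-qⁿ)²/(1-a)² · (q²;q³)_m⁴/(q³;q³)_m⁴
 - (1-aqⁿ)(a-qⁿ)/(1-a)² · ((aq²,q²/a;q³)_m)²/((q³/a,aq³;q³)_m)²`
tends to `(q²;q³)_m⁴/(q³;q³)_m⁴ · (qⁿ + 2[n]² ∑_{r=1}^m (q^{3r-1}/[3r-1]² - q^{3r}/[3r]²))`,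
where `m = (n-1)/3`. -/
theorem stmt_14 (n : ℕ) (hn : 0 < n) (h3 : n % 3 = 1) (q : ℂ) (hq0 : q ≠ 0)
    (hq : ∀ m : ℕ, 0 < m → q ^ m ≠ 1) :
    Tendsto
      (fun a : ℂ =>
        a * (1 - q ^ n) ^ 2 / (1 - a) ^ 2
          * (∏ j ∈ range ((n - 1) / 3), (1 - q ^ 2 * q ^ (3 * j))) ^ 4
          / (∏ j ∈ range ((n - 1) / 3), (1 - q ^ 3 * q ^ (3 * j))) ^ 4
        - (1 - a * q ^ n) * (a - q ^ n) / (1 - a) ^ 2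
          * ((∏ j ∈ range ((n - 1) / 3), (1 - a * q ^ 2 * q ^ (3 * j)))
              * ∏ j ∈ range ((n - 1) / 3), (1 - q ^ 2 / a * q ^ (3 * j))) ^ 2
          / ((∏ j ∈ range ((n - 1) / 3), (1 - q ^ 3 / a * q ^ (3 * j)))
              * ∏ j ∈ range ((n - 1) / 3), (1 - a * q ^ 3 * q ^ (3 * j))) ^ 2)
      (nhdsWithin 1 {1}ᶜ)
      (nhds
        ((∏ j ∈ range ((n - 1) / 3), (1 - q ^ 2 * q ^ (3 * j))) ^ 4
          / (∏ j ∈ range ((n - 1) / 3), (1 - q ^ 3 * q ^ (3 * j))) ^ 4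
          * (q ^ n + 2 * ((1 - q ^ n) / (1 - q)) ^ 2
            * ∑ r ∈ Icc 1 ((n - 1) / 3),
                (q ^ (3 * r - 1) / ((1 - q ^ (3 * r - 1)) / (1 - q)) ^ 2
                  - q ^ (3 * r) / ((1 - q ^ (3 * r)) / (1 - q)) ^ 2)))) := by
  set m := (n - 1) / 3 with hmdef
  set P : ℂ := ∏ j ∈ range m, (1 - q ^ 2 * q ^ (3 * j)) with hPdef
  set Q : ℂ := ∏ j ∈ range m, (1 - q ^ 3 * q ^ (3 * j)) with hQdef
  have hP : P ≠ 0 := prod_ne_zero_iff.mpr fun j _ => hx' q hq j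
  have hQ : Q ≠ 0 := prod_ne_zero_iff.mpr fun j _ => hy' q hq j
  have h1q : (1:ℂ) - q ≠ 0 := sub_ne_zero.mpr (Ne.symm (by simpa using hq 1 one_pos))
  -- the limit of the model function
  have hu : Tendsto (fun a : ℂ => P^4/Q^4 * ((1 - a*q^n)*(a - q^n)))
      (nhdsWithin 1 {1}ᶜ) (nhds (P^4/Q^4 * ((1 - q^n)*(1 - q^n)))) := by
    have hc : ContinuousAt (fun a : ℂ => P^4/Q^4 * ((1 - a*q^n)*(a - q^n))) 1 := by fun_prop
    have := hc.tendsto.mono_left (nhdsWithin_le_nhds (s := {1}ᶜ))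
    simpa using this
  have htot := (tendsto_const_nhds (x := P^4/Q^4 * q^n)).add
    (hu.mul (prod_tendsto q hq m))
  -- identify the limit value
  have hval : P^4/Q^4 * q^n + (P^4/Q^4 * ((1 - q^n)*(1 - q^n))) * (∑ j ∈ range m, cF q j)
      = P ^ 4 / Q ^ 4
          * (q ^ n + 2 * ((1 - q ^ n) / (1 - q)) ^ 2
            * ∑ r ∈ Icc 1 m,
                (q ^ (3 * r - 1) / ((1 - q ^ (3 * r - 1)) / (1 - q)) ^ 2
                  - q ^ (3 * r) / ((1 - q ^ (3 * r)) / (1 - q)) ^ 2)) := by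
    have hIcc : ∑ r ∈ Icc 1 m,
        (q ^ (3 * r - 1) / ((1 - q ^ (3 * r - 1)) / (1 - q)) ^ 2
          - q ^ (3 * r) / ((1 - q ^ (3 * r)) / (1 - q)) ^ 2)
        = ∑ j ∈ range m,
        (q ^ (3 * (1+j) - 1) / ((1 - q ^ (3 * (1+j) - 1)) / (1 - q)) ^ 2
          - q ^ (3 * (1+j)) / ((1 - q ^ (3 * (1+j))) / (1 - q)) ^ 2) := by
      rw [← Finset.Ico_add_one_right_eq_Icc, Finset.sum_Ico_eq_sum_range]
      simp [add_comm]
    rw [hIcc]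
    have hterm : ∀ j ∈ range m,
        2 * ((1 - q ^ n) / (1 - q)) ^ 2 *
          (q ^ (3 * (1+j) - 1) / ((1 - q ^ (3 * (1+j) - 1)) / (1 - q)) ^ 2
            - q ^ (3 * (1+j)) / ((1 - q ^ (3 * (1+j))) / (1 - q)) ^ 2)
        = ((1 - q^n)*(1 - q^n)) * cF q j := by
      intro j _
      have e1 : 3 * (1+j) - 1 = 2 + 3*j := by omega
      have e2 : 3 * (1+j) = 3 + 3*j := by omega
      rw [e1, e2, pow_add, pow_add]
      have hx := hx' q hq j
      have hy := hy' q hq j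
      unfold cF
      field_simp
    have hsums : 2 * ((1 - q ^ n) / (1 - q)) ^ 2 * ∑ j ∈ range m,
        (q ^ (3 * (1+j) - 1) / ((1 - q ^ (3 * (1+j) - 1)) / (1 - q)) ^ 2
          - q ^ (3 * (1+j)) / ((1 - q ^ (3 * (1+j))) / (1 - q)) ^ 2)
        = (1 - q^n)*(1 - q^n) * ∑ j ∈ range m, cF q j := by
      rw [Finset.mul_sum, Finset.mul_sum]
      exact Finset.sum_congr rfl hterm
    rw [mul_add, hsums]
    ring
  rw [← hval]
  -- eventual equality with the model function
  refine htot.congr' ?_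
  have h0 : ∀ᶠ a in nhds (1:ℂ), a ≠ 0 := eventually_ne_nhds one_ne_zero
  have hD1 : ∀ᶠ a in nhds (1:ℂ), (∏ j ∈ range m, (1 - q ^ 3 / a * q ^ (3 * j))) ≠ 0 := by
    have hc : Tendsto (fun a : ℂ => ∏ j ∈ range m, (1 - q ^ 3 / a * q ^ (3 * j))) (nhds 1)
        (nhds (∏ j ∈ range m, (1 - q ^ 3 / (1:ℂ) * q ^ (3 * j)))) :=
      tendsto_finset_prod _ (fun j _ =>
        (show ContinuousAt (fun a : ℂ => 1 - q ^ 3 / a * q ^ (3 * j)) 1 by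
          fun_prop (disch := norm_num)).tendsto)
    have hv : (∏ j ∈ range m, (1 - q ^ 3 / (1:ℂ) * q ^ (3 * j))) ≠ 0 := by
      simp only [div_one]
      exact prod_ne_zero_iff.mpr fun j _ => by
        have := hy' q hq j
        simpa [mul_comm] using this
    exact hc.eventually_ne hv
  have hD2 : ∀ᶠ a in nhds (1:ℂ), (∏ j ∈ range m, (1 - a * q ^ 3 * q ^ (3 * j))) ≠ 0 := by
    have hc : Tendsto (fun a : ℂ => ∏ j ∈ range m, (1 - a * q ^ 3 * q ^ (3 * j))) (nhds 1)
        (nhds (∏ j ∈ range m, (1 - (1:ℂ) * q ^ 3 * q ^ (3 * j)))) :=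
      tendsto_finset_prod _ (fun j _ =>
        (show ContinuousAt (fun a : ℂ => 1 - a * q ^ 3 * q ^ (3 * j)) 1 by fun_prop).tendsto)
    have hv : (∏ j ∈ range m, (1 - (1:ℂ) * q ^ 3 * q ^ (3 * j))) ≠ 0 := by
      simp only [one_mul]
      exact prod_ne_zero_iff.mpr fun j _ => by
        have := hy' q hq j
        simpa [mul_comm] using this
    exact hc.eventually_ne hv
  have hne : ∀ᶠ a in nhdsWithin (1:ℂ) {1}ᶜ, a ≠ 1 := eventually_mem_nhdsWithin
  filter_upwards [hne, (h0.and (hD1.and hD2)).filter_mono nhdsWithin_le_nhds]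
    with a ha ⟨ha0, hd1, hd2⟩
  have ha1 : (1:ℂ) - a ≠ 0 := sub_ne_zero.mpr (Ne.symm ha)
  have hpsi : ∏ j ∈ range m, psiF q j a =
      ((∏ j ∈ range m, (1 - a * q ^ 2 * q ^ (3 * j)))
          * ∏ j ∈ range m, (1 - q ^ 2 / a * q ^ (3 * j))) ^ 2 * Q ^ 4
        / (((∏ j ∈ range m, (1 - q ^ 3 / a * q ^ (3 * j)))
          * ∏ j ∈ range m, (1 - a * q ^ 3 * q ^ (3 * j))) ^ 2 * P ^ 4) := by
    have step : ∏ j ∈ range m, psiF q j a =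
        ∏ j ∈ range m, (((1 - a * q ^ 2 * q ^ (3 * j)) * (1 - q ^ 2 / a * q ^ (3 * j))) ^ 2
            * (1 - q ^ 3 * q ^ (3 * j)) ^ 4
          / (((1 - q ^ 3 / a * q ^ (3 * j)) * (1 - a * q ^ 3 * q ^ (3 * j))) ^ 2
            * (1 - q ^ 2 * q ^ (3 * j)) ^ 4)) :=
      Finset.prod_congr rfl fun j _ => by unfold psiF; congr 1 <;> ring
    rw [step, hPdef, hQdef]
    simp only [Finset.prod_div_distrib, Finset.prod_mul_distrib, Finset.prod_pow]
  rw [hpsi]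
  set N1 : ℂ := ∏ j ∈ range m, (1 - a * q ^ 2 * q ^ (3 * j)) with hN1
  set N2 : ℂ := ∏ j ∈ range m, (1 - q ^ 2 / a * q ^ (3 * j)) with hN2
  set D1 : ℂ := ∏ j ∈ range m, (1 - q ^ 3 / a * q ^ (3 * j)) with hD1'
  set D2 : ℂ := ∏ j ∈ range m, (1 - a * q ^ 3 * q ^ (3 * j)) with hD2'
  have hA : a * (1 - q ^ n) ^ 2 = q ^ n * (1 - a) ^ 2 + (1 - a * q ^ n) * (a - q ^ n) := by
    ring
  rw [hA]
  exact (alg_aux ((1-a)^2) ((D1*D2)^2) (P^4) (Q^4) ((N1*N2)^2)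
    ((1 - a * q ^ n) * (a - q ^ n)) (q ^ n)
    (pow_ne_zero _ ha1) (pow_ne_zero _ (mul_ne_zero hd1 hd2)) (pow_ne_zero _ hP)
    (pow_ne_zero _ hQ)).symm
end
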